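/- Let 𝕂 ∈ {ℝ, ℂ} and let X be a normed space over 𝕂 whose density character dens(X) equals κ, where κ ≥ ℵ₀ is a regular cardinal satisfying 2^{<κ} = κ. Let UWD_κ denote the set of all κ-sequences (x_α)_{α<κ} in X such that (i) the set {‖x_α‖ : α < κ} is unbounded, and (ii) the set {x_α : α < κ} is dense in X for the weak topology σ(X,X*). Then UWD_κ is 2^κ-lineable as a subset of the vector space X^κ. -/

import Mathlib

/-!
Enumerate a norm-dense subset of `X` as `e : κ → X` and fix a bijection `κ ≃ κ × κ`. The map
sending `g : κ → 𝕜` to the sequence `(α, β) ↦ g α • e β` is linear and injective, so by the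
Erdős–Kaplansky theorem its image has dimension `dim (𝕜 ^ κ) = |𝕜| ^ κ = 𝔠 ^ κ = 2 ^ κ`. If
`g α ≠ 0`, the range of the image of `g` contains `g α • range e`, which is norm dense; a norm
dense set is weakly dense, and in a nontrivial normed space it is unbounded.
-/

open Cardinal

universe u

/-- The density character of a topological space: the least cardinality of a dense subset. -/
noncomputable def densityCharacter (X : Type u) [TopologicalSpace X] : Cardinal.{u} :=
  sInf { c : Cardinal.{u} | ∃ s : Set X, Dense s ∧ Cardinal.mk s = c }

/-- The weak topology `σ(X, X*)` on a normed space `X` over `𝕜`: the initial topology induced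
by all continuous linear functionals on `X`. -/
noncomputable def weakTopology (𝕜 : Type) (X : Type u) [RCLike 𝕜]
    [NormedAddCommGroup X] [NormedSpace 𝕜 X] : TopologicalSpace X :=
  ⨅ φ : X →L[𝕜] 𝕜, TopologicalSpace.induced φ inferInstance

open Function Set
open scoped Pointwise

theorem RCLike.mk_eq_continuum (𝕜 : Type*) [RCLike 𝕜] : #𝕜 = 𝔠 := by
  apply le_antisymm
  · have h : Injective fun z : 𝕜 => (RCLike.re z, RCLike.im z) := fun z w h =>
      RCLike.ext (congrArg Prod.fst h) (congrArg Prod.snd h)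
    simpa [mk_real, continuum_mul_self] using lift_mk_le_lift_mk_of_injective h
  · simpa [mk_real] using lift_mk_le_lift_mk_of_injective (RCLike.ofReal_injective (K := 𝕜))

theorem rank_fun_eq_two_power (𝕜 : Type*) [RCLike 𝕜] (ι : Type*) [Infinite ι] :
    Module.rank 𝕜 (ι → 𝕜) = 2 ^ lift #ι := by
  rw [rank_fun_infinite, mk_arrow, RCLike.mk_eq_continuum, lift_continuum, continuum,
    ← power_mul, aleph0_mul_eq (by simp)]

theorem exists_denseRange_of_densityCharacter_eq {X ι : Type u} [TopologicalSpace X]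
    (h : densityCharacter X = #ι) : ∃ e : ι → X, DenseRange e := by
  obtain ⟨D, hD, hDι⟩ : ∃ D : Set X, Dense D ∧ #D = densityCharacter X :=
    csInf_mem (s := {c | ∃ s : Set X, Dense s ∧ #s = c}) ⟨_, univ, dense_univ, rfl⟩
  obtain ⟨σ⟩ := Cardinal.eq.mp (hDι.trans h).symm
  exact ⟨Subtype.val ∘ σ, by rwa [DenseRange, σ.surjective.range_comp, Subtype.range_coe]⟩

theorem nontrivial_of_aleph0_le_densityCharacter {X : Type u} [TopologicalSpace X]
    (h : ℵ₀ ≤ densityCharacter X) : Nontrivial X := by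
  by_contra hX
  have hle : densityCharacter X ≤ #(univ : Set X) := csInf_le' ⟨univ, dense_univ, rfl⟩
  rw [mk_univ] at hle
  have hX1 : #X ≤ 1 := le_one_iff_subsingleton.mpr (not_nontrivial_iff_subsingleton.mp hX)
  exact not_le_of_gt one_lt_aleph0 (h.trans (hle.trans hX1))

theorem Dense.weakTopology {𝕜 : Type} [RCLike 𝕜] {X : Type u} [NormedAddCommGroup X]
    [NormedSpace 𝕜 X] {s : Set X} (hs : Dense s) : @Dense X (_root_.weakTopology 𝕜 X) s := by
  have hle : (inferInstance : TopologicalSpace X) ≤ _root_.weakTopology 𝕜 X :=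
    le_iInf fun φ => continuous_iff_le_induced.mp φ.continuous
  rw [@dense_iff_inter_open X (_root_.weakTopology 𝕜 X)]
  exact fun U hU hUne => dense_iff_inter_open.mp hs U (hle U hU) hUne

section OuterSMul

variable {R M ι κ : Type*} [CommSemiring R] [AddCommMonoid M] [Module R M]

variable (R) in
def outerSMul (e : κ → M) : (ι → R) →ₗ[R] (ι × κ → M) :=
  LinearMap.pi fun q => (LinearMap.proj q.1).smulRight (e q.2)

theorem smul_range_subset_range_outerSMul (e : κ → M) (g : ι → R) (i : ι) :
    g i • range e ⊆ range (outerSMul R e g) := by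
  rintro _ ⟨_, ⟨k, rfl⟩, rfl⟩
  exact ⟨(i, k), rfl⟩

variable {X : Type*} [NormedAddCommGroup X]

theorem DenseRange.not_exists_norm_le (𝕜 : Type*) [NontriviallyNormedField 𝕜] [NormedSpace 𝕜 X]
    [Nontrivial X] {y : ι → X} (hy : DenseRange y) :
    ¬ ∃ C : ℝ, ∀ i, ‖y i‖ ≤ C := by
  rintro ⟨C, hC⟩
  apply NormedSpace.unbounded_univ 𝕜 X
  rw [← hy.closure_range, Metric.isBounded_closure_iff]
  exact isBounded_iff_forall_norm_le.mpr ⟨C, forall_mem_range.mpr hC⟩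

variable {𝕜 : Type*} [NontriviallyNormedField 𝕜] [NormedSpace 𝕜 X]

theorem denseRange_outerSMul {e : κ → X} (he : DenseRange e) {g : ι → 𝕜} (hg : g ≠ 0) :
    DenseRange (outerSMul 𝕜 e g) := by
  obtain ⟨i, hi⟩ := Function.ne_iff.mp hg
  refine Dense.mono (smul_range_subset_range_outerSMul e g i) ?_
  rw [dense_iff_closure_eq, closure_smul₀' hi, he.closure_range, smul_set_univ₀ hi]

theorem outerSMul_injective [Nontrivial X] {e : κ → X} (he : DenseRange e) :
    Injective (outerSMul (ι := ι) 𝕜 e) := by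
  refine (injective_iff_map_eq_zero _).mpr fun g hg => ?_
  by_contra hne
  exact (denseRange_outerSMul he hne).not_exists_norm_le 𝕜 ⟨0, fun q => by rw [hg]; simp⟩

end OuterSMul

theorem exists_injective_linearMap_forall_denseRange {𝕜 X ι : Type*} [NontriviallyNormedField 𝕜]
    [NormedAddCommGroup X] [NormedSpace 𝕜 X] [Nontrivial X] [Infinite ι] {e : ι → X}
    (he : DenseRange e) :
    ∃ T : (ι → 𝕜) →ₗ[𝕜] (ι → X), Injective T ∧ ∀ g ≠ 0, DenseRange (T g) := by
  obtain ⟨σ⟩ : Nonempty (ι ≃ ι × ι) := Cardinal.eq.mp (by simp [mul_eq_self (aleph0_le_mk ι)])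
  refine ⟨LinearMap.funLeft 𝕜 X σ ∘ₗ outerSMul 𝕜 e,
    (LinearMap.funLeft_injective_of_surjective 𝕜 X σ σ.surjective).comp (outerSMul_injective he),
    fun g hg => ?_⟩
  have hrange : range (outerSMul 𝕜 e g ∘ σ) = range (outerSMul 𝕜 e g) := σ.surjective.range_comp _
  change Dense (range (outerSMul 𝕜 e g ∘ σ))
  exact hrange ▸ denseRange_outerSMul he hg

theorem statement3_general (𝕜 : Type) [RCLike 𝕜] (X : Type u)
    [NormedAddCommGroup X] [NormedSpace 𝕜 X]
    (κ : Cardinal.{u}) (hreg : κ.IsRegular)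
    (hdens : densityCharacter X = κ) :
    ∃ W : Submodule 𝕜 (κ.ord.ToType → X),
      Module.rank 𝕜 ↥W = 2 ^ κ ∧
      ∀ x ∈ W, x ≠ 0 →
        (¬ ∃ C : ℝ, ∀ α : κ.ord.ToType, ‖x α‖ ≤ C) ∧
        @Dense X (weakTopology 𝕜 X) (Set.range x) := by
  have hκ : ℵ₀ ≤ κ := hreg.aleph0_le
  have : Infinite κ.ord.ToType := by rw [infinite_iff, mk_ord_toType]; exact hκ
  have := nontrivial_of_aleph0_le_densityCharacter (hdens ▸ hκ)
  obtain ⟨e, he⟩ := exists_denseRange_of_densityCharacter_eq (hdens.trans (mk_ord_toType κ).symm)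
  obtain ⟨T, hT, hdense⟩ := exists_injective_linearMap_forall_denseRange (𝕜 := 𝕜) he
  refine ⟨LinearMap.range T, ?_, ?_⟩
  · rw [rank_range_of_injective T hT, rank_fun_eq_two_power, lift_uzero, mk_ord_toType]
  · rintro _ ⟨g, rfl⟩ hTg
    have hg := hdense g (by rintro rfl; exact hTg (map_zero T))
    exact ⟨hg.not_exists_norm_le 𝕜, hg.weakTopology⟩

/-- Let `𝕜 ∈ {ℝ, ℂ}` and let `X` be a normed space over `𝕜` whose density
character equals `κ`, where `κ ≥ ℵ₀` is a regular cardinal.  The set `UWD_κ` of all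
`κ`-sequences `(x_α)_{α < κ}` in `X` (functions from the ordinals below `κ` to `X`) such that
`{‖x α‖ : α < κ}` is unbounded and `{x α : α < κ}` is dense in the weak topology `σ(X, X*)`,
satisfies `2 ^ {<κ} = κ` implies it is `2 ^ κ`-lineable in `X ^ κ`. -/
theorem statement3 (𝕜 : Type) [RCLike 𝕜] (X : Type u)
    [NormedAddCommGroup X] [NormedSpace 𝕜 X]
    (κ : Cardinal.{u}) (hreg : κ.IsRegular)
    (hdens : densityCharacter X = κ) (hpow : (2 : Cardinal.{u}) ^< κ = κ) :
    ∃ W : Submodule 𝕜 (κ.ord.ToType → X),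
      Module.rank 𝕜 ↥W = 2 ^ κ ∧
      ∀ x ∈ W, x ≠ 0 →
        (¬ ∃ C : ℝ, ∀ α : κ.ord.ToType, ‖x α‖ ≤ C) ∧
        @Dense X (weakTopology 𝕜 X) (Set.range x) :=
  statement3_general 𝕜 X κ hreg hdens
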